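/- Let m ≥ 1 and let (i,j) ∈ {(1,1), (2,0), (0,2)} with (m,i,j) ≠ (1,0,2). Then π_ij is the unique 1-footed prestar labelling of T_m having exponent w_ij. -/
import Mathlib


namespace FLL

/-- Flags of the thread `T_m` (obtained from the path `v_0 e_0 v_1 e_1 ⋯ e_m v_{m+1}`
by adding feet `f_{k+1} = v_{k+1} w_{k+1}` for `k = 0, …, m-1`):
* `vLeft k`  is the flag `(v_k, e_k)` for `0 ≤ k ≤ m`;
* `vRight k` is the flag `(v_{k+1}, e_k)` for `0 ≤ k ≤ m`;
* `vFoot k`  is the flag `(v_{k+1}, f_{k+1})` for `0 ≤ k ≤ m-1`;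
* `wFoot k`  is the flag `(w_{k+1}, f_{k+1})` for `0 ≤ k ≤ m-1`. -/
inductive ThreadFlag (m : ℕ) where
  | vLeft (k : Fin (m+1))
  | vRight (k : Fin (m+1))
  | vFoot (k : Fin m)
  | wFoot (k : Fin m)
deriving DecidableEq

/-- Edges of the thread `T_m`: `e k` is the path edge `e_k` (`0 ≤ k ≤ m`),
`f k` is the foot edge `f_{k+1}` (`0 ≤ k ≤ m-1`). -/
inductive ThreadEdge (m : ℕ) where
  | e (k : Fin (m+1))
  | f (k : Fin m)
deriving DecidableEq

namespace Thread

variable {m : ℕ}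

/-- A prestar labelling of `T_m`: a function from the flags to `{0,1,2}` whose
restriction to the three flags at the internal vertex `v_{k+1}` (`0 ≤ k ≤ m-1`)
is a bijection onto `{0,1,2}`. -/
def IsPrestar (π : ThreadFlag m → Fin 3) : Prop :=
  ∀ k : Fin m,
    π (.vRight k.castSucc) ≠ π (.vLeft k.succ) ∧
    π (.vRight k.castSucc) ≠ π (.vFoot k) ∧
    π (.vLeft k.succ) ≠ π (.vFoot k)

/-- The exponent of a prestar labelling: `w(e) = π(ue) + π(ve)` for each edge `e = uv`. -/
def texp (π : ThreadFlag m → Fin 3) : ThreadEdge m → ℕ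
  | .e k => (π (.vLeft k) : ℕ) + (π (.vRight k) : ℕ)
  | .f k => (π (.vFoot k) : ℕ) + (π (.wFoot k) : ℕ)

/-- A prestar labelling is 1-footed if every foot flag `w_k f_k` is labelled `1`. -/
def OneFooted (π : ThreadFlag m → Fin 3) : Prop := ∀ k : Fin m, π (.wFoot k) = 1

/-- The constant weighting `w_𝟐 ≡ 2`. -/
def w2 : ThreadEdge m → ℕ := fun _ => 2

/-- The weighting `w_11` (for `m ≥ 1`): as `w_𝟐` except `w(e_0) = 1`, `w(e_m) = 3`. -/
def w11 : ThreadEdge m → ℕ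
  | .e k => if (k : ℕ) = 0 then 1 else if (k : ℕ) = m then 3 else 2
  | .f _ => 2

/-- The weighting `w_02` (for `m ≥ 1`): as `w_𝟐` except `w(e_0) = 1`, `w(f_1) = 3`. -/
def w02 : ThreadEdge m → ℕ
  | .e k => if (k : ℕ) = 0 then 1 else 2
  | .f k => if (k : ℕ) = 0 then 3 else 2

/-- The weighting `w_20` (for `m ≥ 1`): as `w_𝟐` except `w(e_0) = 3`, `w(e_1) = 0`,
`w(f_1) = 3`. -/
def w20 : ThreadEdge m → ℕ
  | .e k => if (k : ℕ) = 0 then 3 else if (k : ℕ) = 1 then 0 else 2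
  | .f k => if (k : ℕ) = 0 then 3 else 2

/-- The 1-footed prestar labelling `ρ_02`. -/
def rho02 : ThreadFlag m → Fin 3
  | .vLeft _ => 0
  | .vRight _ => 2
  | .vFoot _ => 1
  | .wFoot _ => 1

/-- The 1-footed prestar labelling `ρ_20`. -/
def rho20 : ThreadFlag m → Fin 3
  | .vLeft _ => 2
  | .vRight _ => 0
  | .vFoot _ => 1
  | .wFoot _ => 1

/-- The prestar labelling `ρ_11` of the trivial thread `T_0` (both flags labelled 1). -/
def rho11 : ThreadFlag m → Fin 3 := fun _ => 1

/-- The 1-footed prestar labelling `π_11` (for `m ≥ 1`). -/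
def pi11 : ThreadFlag m → Fin 3
  | .vLeft k => if (k : ℕ) = 0 then 1 else 2
  | .vRight k => if (k : ℕ) = m then 1 else 0
  | .vFoot _ => 1
  | .wFoot _ => 1

/-- The 1-footed prestar labelling `π_02` (for `m ≥ 1`). -/
def pi02 : ThreadFlag m → Fin 3
  | .vLeft _ => 0
  | .vRight k => if (k : ℕ) = 0 then 1 else 2
  | .vFoot k => if (k : ℕ) = 0 then 2 else 1
  | .wFoot _ => 1

/-- The 1-footed prestar labelling `π_20` (for `m ≥ 1`). -/
def pi20 : ThreadFlag m → Fin 3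
  | .vLeft k => if (k : ℕ) = 1 then 0 else 2
  | .vRight k => if (k : ℕ) = 0 then 1 else 0
  | .vFoot k => if (k : ℕ) = 0 then 2 else 1
  | .wFoot _ => 1

/-- The exceptional 1-footed prestar labelling `π′_11` of `T_1`. -/
def pi'11 : ThreadFlag m → Fin 3
  | .vLeft _ => 1
  | .vRight k => if (k : ℕ) = 0 then 0 else 1
  | .vFoot _ => 2
  | .wFoot _ => 1

/-- Sign contribution of one pair of (edge, label) data, relative to an edge ordering. -/
def psign (ord : ThreadEdge m → ℕ) (a b : ThreadEdge m) (x y : Fin 3) : ℤ :=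
  if ord a < ord b then ((y : ℤ) - (x : ℤ)).sign else ((x : ℤ) - (y : ℤ)).sign

/-- The sign of the star labelling at the internal vertex `v_{k+1}`: the sign of the
permutation of `{0,1,2}` given by the labels of the three flags at `v_{k+1}` taken in
increasing edge order (computed as a product over the three pairs of flags). -/
def vsgn (ord : ThreadEdge m → ℕ) (π : ThreadFlag m → Fin 3) (k : Fin m) : ℤ :=
  psign ord (.e k.castSucc) (.e k.succ) (π (.vRight k.castSucc)) (π (.vLeft k.succ)) *
  psign ord (.e k.castSucc) (.f k) (π (.vRight k.castSucc)) (π (.vFoot k)) *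
  psign ord (.e k.succ) (.f k) (π (.vLeft k.succ)) (π (.vFoot k))

/-- The sign of a prestar labelling of `T_m`: `sgn(π) = ∏_{k=1}^m sgn(π_{v_k})`. -/
def psgn (ord : ThreadEdge m → ℕ) (π : ThreadFlag m → Fin 3) : ℤ :=
  ∏ k : Fin m, vsgn ord π k

end Thread
end FLL

namespace FLL.Thread

variable {m : ℕ}

lemma vne {a b : Fin 3} (h : a ≠ b) : (a : ℕ) ≠ (b : ℕ) := fun h' => h (Fin.ext h')

-- Backward direction: pi11
lemma bwd11 (hm : 1 ≤ m) :
    IsPrestar (pi11 (m := m)) ∧ OneFooted (pi11 (m := m)) ∧ texp (pi11 (m := m)) = w11 := by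
  refine ⟨?_, fun k => rfl, ?_⟩
  · intro k
    have hk := k.isLt
    simp only [pi11, Fin.coe_castSucc, Fin.val_succ]
    refine ⟨?_, ?_, ?_⟩ <;> split_ifs <;> first | omega | decide | simp_all
  · funext x
    cases x with
    | e k =>
      have hk := k.isLt
      simp only [texp, pi11, w11]
      split_ifs <;> first | omega | rfl
    | f k => rfl

lemma bwd20 (hm : 1 ≤ m) :
    IsPrestar (pi20 (m := m)) ∧ OneFooted (pi20 (m := m)) ∧ texp (pi20 (m := m)) = w20 := by
  refine ⟨?_, fun k => rfl, ?_⟩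
  · intro k
    have hk := k.isLt
    simp only [pi20, Fin.coe_castSucc, Fin.val_succ]
    refine ⟨?_, ?_, ?_⟩ <;> split_ifs <;> first | omega | decide | simp_all
  · funext x
    cases x with
    | e k =>
      have hk := k.isLt
      simp only [texp, pi20, w20]
      split_ifs <;> first | omega | rfl
    | f k =>
      simp only [texp, pi20, w20]
      split_ifs <;> rfl

lemma bwd02 (hm : 1 ≤ m) :
    IsPrestar (pi02 (m := m)) ∧ OneFooted (pi02 (m := m)) ∧ texp (pi02 (m := m)) = w02 := by
  refine ⟨?_, fun k => rfl, ?_⟩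
  · intro k
    have hk := k.isLt
    simp only [pi02, Fin.coe_castSucc, Fin.val_succ]
    refine ⟨?_, ?_, ?_⟩ <;> split_ifs <;> first | omega | decide | simp_all
  · funext x
    cases x with
    | e k =>
      have hk := k.isLt
      simp only [texp, pi02, w02]
      split_ifs <;> first | omega | rfl
    | f k =>
      simp only [texp, pi02, w02]
      split_ifs <;> rfl

-- Forward direction: pi11
lemma fwd11 (hm : 1 ≤ m) (π : ThreadFlag m → Fin 3)
    (h1 : IsPrestar π) (h2 : OneFooted π) (h3 : texp π = w11) : π = pi11 := by
  have he : ∀ k : Fin (m+1), (π (.vLeft k) : ℕ) + (π (.vRight k) : ℕ) = w11 (.e k) :=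
    fun k => congrFun h3 (.e k)
  have hf : ∀ k : Fin m, (π (.vFoot k) : ℕ) = 1 := by
    intro k
    have h := congrFun h3 (.f k)
    simp only [texp, w11, h2 k] at h
    omega
  have hP : ∀ k : Fin m,
      (π (.vRight k.castSucc) : ℕ) ≠ (π (.vLeft k.succ) : ℕ) ∧
      (π (.vRight k.castSucc) : ℕ) ≠ 1 ∧
      (π (.vLeft k.succ) : ℕ) ≠ 1 := by
    intro k
    obtain ⟨a, b, c⟩ := h1 k
    exact ⟨vne a, by rw [← hf k]; exact vne b, by rw [← hf k]; exact vne c⟩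
  have main : ∀ k : Fin (m+1),
      (π (.vLeft k) : ℕ) = (if (k : ℕ) = 0 then 1 else 2) ∧
      (π (.vRight k) : ℕ) = (if (k : ℕ) = m then 1 else 0) := by
    intro k
    induction k using Fin.induction with
    | zero =>
      have hv0 : ((⟨0, hm⟩ : Fin m).castSucc) = (0 : Fin (m+1)) := rfl
      have h0 := he 0
      have hp := hP ⟨0, hm⟩
      rw [hv0] at hp
      have b1 := (π (.vLeft (0 : Fin (m+1)))).isLt
      have b2 := (π (.vRight (0 : Fin (m+1)))).isLt
      have hz : ((0 : Fin (m+1)) : ℕ) = 0 := rfl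
      simp only [w11, hz, Fin.val_zero] at h0 ⊢
      split_ifs at h0 ⊢ <;> first | omega | contradiction
    | succ i ih =>
      have hk := i.isLt
      have hp := hP i
      have hi := he i.succ
      have b1 := (π (.vLeft i.succ)).isLt
      have b2 := (π (.vRight i.succ)).isLt
      simp only [w11, Fin.coe_castSucc, Fin.val_succ] at ih hi ⊢
      split_ifs at ih hi ⊢ <;> first | omega | contradiction
  funext x
  cases x with
  | vLeft k =>
    apply Fin.ext
    have := (main k).1
    simp only [pi11]
    split_ifs at this ⊢ <;> simp_all
  | vRight k =>
    apply Fin.ext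
    have := (main k).2
    simp only [pi11]
    split_ifs at this ⊢ <;> simp_all
  | vFoot k =>
    apply Fin.ext
    have := hf k
    simp_all [pi11]
  | wFoot k =>
    rw [h2 k]; rfl

-- Forward direction: pi20
lemma fwd20 (hm : 1 ≤ m) (π : ThreadFlag m → Fin 3)
    (h1 : IsPrestar π) (h2 : OneFooted π) (h3 : texp π = w20) : π = pi20 := by
  have he : ∀ k : Fin (m+1), (π (.vLeft k) : ℕ) + (π (.vRight k) : ℕ) = w20 (.e k) :=
    fun k => congrFun h3 (.e k)
  have hf : ∀ k : Fin m, (π (.vFoot k) : ℕ) = (if (k : ℕ) = 0 then 2 else 1) := by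
    intro k
    have h := congrFun h3 (.f k)
    simp only [texp, w20, h2 k] at h
    split_ifs at h ⊢ <;> first | omega | contradiction
  have hP : ∀ k : Fin m,
      (π (.vRight k.castSucc) : ℕ) ≠ (π (.vLeft k.succ) : ℕ) ∧
      (π (.vRight k.castSucc) : ℕ) ≠ (π (.vFoot k) : ℕ) ∧
      (π (.vLeft k.succ) : ℕ) ≠ (π (.vFoot k) : ℕ) := by
    intro k
    obtain ⟨a, b, c⟩ := h1 k
    exact ⟨vne a, vne b, vne c⟩
  have main : ∀ k : Fin (m+1),
      (π (.vLeft k) : ℕ) = (if (k : ℕ) = 1 then 0 else 2) ∧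
      (π (.vRight k) : ℕ) = (if (k : ℕ) = 0 then 1 else 0) := by
    intro k
    induction k using Fin.induction with
    | zero =>
      have hv0 : ((⟨0, hm⟩ : Fin m).castSucc) = (0 : Fin (m+1)) := rfl
      have h0 := he 0
      have hp := hP ⟨0, hm⟩
      have hfv := hf ⟨0, hm⟩
      rw [hv0] at hp
      have b1 := (π (.vLeft (0 : Fin (m+1)))).isLt
      have b2 := (π (.vRight (0 : Fin (m+1)))).isLt
      have hz : ((0 : Fin (m+1)) : ℕ) = 0 := rfl
      have hv : ((⟨0, hm⟩ : Fin m) : ℕ) = 0 := rfl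
      simp only [w20, hz, hv, Fin.val_zero] at h0 hfv ⊢
      split_ifs at h0 hfv ⊢ <;> first | omega | contradiction
    | succ i ih =>
      have hk := i.isLt
      have hp := hP i
      have hfv := hf i
      have hi := he i.succ
      have b1 := (π (.vLeft i.succ)).isLt
      have b2 := (π (.vRight i.succ)).isLt
      simp only [w20, Fin.coe_castSucc, Fin.val_succ] at ih hi ⊢
      split_ifs at ih hi hfv ⊢ <;> first | omega | contradiction
  funext x
  cases x with
  | vLeft k =>
    apply Fin.ext
    have := (main k).1
    simp only [pi20]
    split_ifs at this ⊢ <;> simp_all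
  | vRight k =>
    apply Fin.ext
    have := (main k).2
    simp only [pi20]
    split_ifs at this ⊢ <;> simp_all
  | vFoot k =>
    apply Fin.ext
    have := hf k
    simp only [pi20]
    split_ifs at this ⊢ <;> simp_all
  | wFoot k =>
    rw [h2 k]; rfl

-- Forward direction: pi02 (needs m ≥ 2)
lemma fwd02 (hm : 2 ≤ m) (π : ThreadFlag m → Fin 3)
    (h1 : IsPrestar π) (h2 : OneFooted π) (h3 : texp π = w02) : π = pi02 := by
  have hm0 : 0 < m := by omega
  have hm1 : 1 < m := by omega
  have he : ∀ k : Fin (m+1), (π (.vLeft k) : ℕ) + (π (.vRight k) : ℕ) = w02 (.e k) :=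
    fun k => congrFun h3 (.e k)
  have hf : ∀ k : Fin m, (π (.vFoot k) : ℕ) = (if (k : ℕ) = 0 then 2 else 1) := by
    intro k
    have h := congrFun h3 (.f k)
    simp only [texp, w02, h2 k] at h
    split_ifs at h ⊢ <;> first | omega | contradiction
  have hP : ∀ k : Fin m,
      (π (.vRight k.castSucc) : ℕ) ≠ (π (.vLeft k.succ) : ℕ) ∧
      (π (.vRight k.castSucc) : ℕ) ≠ (π (.vFoot k) : ℕ) ∧
      (π (.vLeft k.succ) : ℕ) ≠ (π (.vFoot k) : ℕ) := by
    intro k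
    obtain ⟨a, b, c⟩ := h1 k
    exact ⟨vne a, vne b, vne c⟩
  have main : ∀ k : Fin (m+1),
      (π (.vLeft k) : ℕ) = 0 ∧
      (π (.vRight k) : ℕ) = (if (k : ℕ) = 0 then 1 else 2) := by
    intro k
    induction k using Fin.induction with
    | zero =>
      have hv0 : ((⟨0, hm0⟩ : Fin m).castSucc) = (0 : Fin (m+1)) := rfl
      have hcc : ((⟨1, hm1⟩ : Fin m).castSucc) = ((⟨0, hm0⟩ : Fin m).succ) := rfl
      have h0 := he 0
      have h1e := he ((⟨0, hm0⟩ : Fin m).succ)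
      have hp0 := hP ⟨0, hm0⟩
      have hp1 := hP ⟨1, hm1⟩
      have hf0 := hf ⟨0, hm0⟩
      have hf1 := hf ⟨1, hm1⟩
      rw [hv0] at hp0
      rw [hcc] at hp1
      have b1 := (π (.vLeft (0 : Fin (m+1)))).isLt
      have b2 := (π (.vRight (0 : Fin (m+1)))).isLt
      have b3 := (π (.vLeft ((⟨0, hm0⟩ : Fin m).succ))).isLt
      have b4 := (π (.vRight ((⟨0, hm0⟩ : Fin m).succ))).isLt
      have b5 := (π (.vFoot (⟨1, hm1⟩ : Fin m))).isLt
      have hz : ((0 : Fin (m+1)) : ℕ) = 0 := rfl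
      have hs1 : (((⟨0, hm0⟩ : Fin m).succ) : ℕ) = 1 := rfl
      have hv : ((⟨0, hm0⟩ : Fin m) : ℕ) = 0 := rfl
      have hv1 : ((⟨1, hm1⟩ : Fin m) : ℕ) = 1 := rfl
      simp only [w02, hz, hs1, hv, hv1, Fin.val_zero, Fin.val_succ] at h0 h1e hf0 hf1 ⊢
      split_ifs at h0 h1e hf0 hf1 ⊢ <;> first | omega | contradiction
    | succ i ih =>
      have hk := i.isLt
      have hp := hP i
      have hfv := hf i
      have hi := he i.succ
      have b1 := (π (.vLeft i.succ)).isLt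
      have b2 := (π (.vRight i.succ)).isLt
      simp only [w02, Fin.coe_castSucc, Fin.val_succ] at ih hi ⊢
      split_ifs at ih hi hfv ⊢ <;> first | omega | contradiction
  funext x
  cases x with
  | vLeft k =>
    apply Fin.ext
    have := (main k).1
    simp_all [pi02]
  | vRight k =>
    apply Fin.ext
    have := (main k).2
    simp only [pi02]
    split_ifs at this ⊢ <;> simp_all
  | vFoot k =>
    apply Fin.ext
    have := hf k
    simp only [pi02]
    split_ifs at this ⊢ <;> simp_all
  | wFoot k =>
    rw [h2 k]; rfl


end FLL.Thread

open FLL FLL.Thread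

/-- part of Lemma 3.1.  Let `m ≥ 1` and `(i,j) ∈ {(1,1),(2,0),(0,2)}`
with `(m,i,j) ≠ (1,0,2)`.  Then `π_ij` is the unique 1-footed prestar labelling of `T_m`
having exponent `w_ij`. -/
theorem statement5 (m : ℕ) (hm : 1 ≤ m) :
    (∀ π : ThreadFlag m → Fin 3,
      (IsPrestar π ∧ OneFooted π ∧ texp π = w11) ↔ π = pi11) ∧
    (∀ π : ThreadFlag m → Fin 3,
      (IsPrestar π ∧ OneFooted π ∧ texp π = w20) ↔ π = pi20) ∧
    (m ≠ 1 → ∀ π : ThreadFlag m → Fin 3,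
      (IsPrestar π ∧ OneFooted π ∧ texp π = w02) ↔ π = pi02) := by
  refine ⟨fun π => ⟨fun ⟨a,b,c⟩ => fwd11 hm π a b c, fun h => h ▸ bwd11 hm⟩,
    fun π => ⟨fun ⟨a,b,c⟩ => fwd20 hm π a b c, fun h => h ▸ bwd20 hm⟩,
    fun hm1 π => ⟨fun ⟨a,b,c⟩ => fwd02 (by omega) π a b c, fun h => h ▸ bwd02 hm⟩⟩
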